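/- arXiv:0810.0443 — 4 statements merged into one kernel-verified Lean document; each statement's English description precedes it below -/
import Mathlib

section
/- The matrices A = [[5,2],[2,1]] and B = [[1,2],[2,5]] in SL₂(ℤ) generate a free subgroup of rank 2 of SL₂(ℤ). -/
/-!
`A` and `B` act on `ℍ` by Möbius transformations. For `g = [[a, b], [c, d]]` the cocycle
relation gives `|c' (g z) + d'| * |c z + d| = 1`, where `[c', d']` is the bottom row of `g⁻¹`,
so `g` maps the outside of the isometric circle `|c z + d| = 1` of `g` into the closed disk
bounded by the isometric circle of `g⁻¹`. For `A^{±1}` and `B^{±1}` these circles are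
`|2 z - p| = 1` with `p = 5, -1, 1, -5`; their closed disks meet at most on the real axis,
hence are disjoint in `ℍ`, and the ping-pong lemma shows that `A` and `B` generate a free group.
-/

/-- The matrix `A = [[5,2],[2,1]]` as an element of `SL₂(ℤ)`. -/
def matA : Matrix.SpecialLinearGroup (Fin 2) ℤ :=
  ⟨!![5, 2; 2, 1], by norm_num [Matrix.det_fin_two_of]⟩

/-- The matrix `B = [[1,2],[2,5]]` as an element of `SL₂(ℤ)`. -/
def matB : Matrix.SpecialLinearGroup (Fin 2) ℤ :=
  ⟨!![1, 2; 2, 5], by norm_num [Matrix.det_fin_two_of]⟩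

open scoped MatrixGroups Pointwise
open Function

namespace UpperHalfPlane

lemma norm_denom_inv_smul_mul_norm_denom (g : GL (Fin 2) ℝ) (z : ℍ) :
    ‖denom g⁻¹ ↑(g • z)‖ * ‖denom g z‖ = 1 := by
  simpa using congrArg norm (denom_cocycle_σ g⁻¹ g z).symm

def isometricDisk (g : GL (Fin 2) ℝ) : Set ℍ := {z | ‖denom g z‖ ≤ 1}

lemma smul_mem_isometricDisk_inv {g : GL (Fin 2) ℝ} {z : ℍ} (hz : z ∉ isometricDisk g) :
    g • z ∈ isometricDisk g⁻¹ := by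
  have h := norm_denom_inv_smul_mul_norm_denom g z
  simp only [isometricDisk, Set.mem_ofPred_eq, not_le] at hz ⊢
  nlinarith [norm_nonneg (denom g⁻¹ ↑(g • z))]

lemma smul_compl_isometricDisk_subset (g : GL (Fin 2) ℝ) :
    g • (isometricDisk g)ᶜ ⊆ isometricDisk g⁻¹ := by
  rintro _ ⟨z, hz, rfl⟩
  exact smul_mem_isometricDisk_inv hz

lemma eq_univ_of_isometricDisk_inv_eq_empty {g : GL (Fin 2) ℝ} (h : isometricDisk g⁻¹ = ∅) :
    isometricDisk g = Set.univ := by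
  refine Set.eq_univ_of_forall fun z => by_contra fun hz => ?_
  simpa [h] using smul_mem_isometricDisk_inv hz

-- `ι : Type` because `FreeGroup.injective_lift_of_ping_pong` puts the group in the universe of `ι`.
theorem _root_.FreeGroup.injective_lift_of_pairwise_disjoint_isometricDisk {ι : Type}
    [Nontrivial ι] (a : ι → GL (Fin 2) ℝ)
    (h : Pairwise (Disjoint on Sum.elim (fun i => isometricDisk (a i)⁻¹)
      (fun i => isometricDisk (a i)))) :
    Injective (FreeGroup.lift a) := by
  have hXY (i j : ι) : Disjoint (isometricDisk (a i)⁻¹) (isometricDisk (a j)) :=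
    h (Sum.inl_ne_inr (a := i) (b := j))
  have hY : Pairwise (Disjoint on fun i => isometricDisk (a i)) :=
    fun i j hij => h (Sum.inr_injective.ne hij)
  refine FreeGroup.injective_lift_of_ping_pong a (fun i => isometricDisk (a i)⁻¹)
    (fun i => isometricDisk (a i)) ?_
    (fun i j hij => h (Sum.inl_injective.ne hij)) hY hXY
    (fun i => smul_compl_isometricDisk_subset (a i))
    fun i => by simpa only [Pi.inv_apply, inv_inv] using smul_compl_isometricDisk_subset (a i)⁻¹
  -- An empty disk of `(a i)⁻¹` would make the disks of `a i` and of any `a j` all of `ℍ`.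
  intro i
  by_contra hi
  obtain ⟨j, hji⟩ := exists_ne i
  have hAi := eq_univ_of_isometricDisk_inv_eq_empty (Set.not_nonempty_iff_eq_empty.mp hi)
  have hAj : isometricDisk (a j) = Set.univ := by
    refine eq_univ_of_isometricDisk_inv_eq_empty ?_
    simpa [hAi] using hXY j i
  simpa [onFun, hAi, hAj] using hY hji

lemma disjoint_setOf_norm_two_mul_sub_le_one {p q : ℝ} (hpq : 2 ≤ |p - q|) :
    Disjoint {z : ℍ | ‖2 * (z : ℂ) - p‖ ≤ 1} {z : ℍ | ‖2 * (z : ℂ) - q‖ ≤ 1} := by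
  have hsq {w : ℂ} (hw : ‖w‖ ≤ 1) : w.re ^ 2 + w.im ^ 2 ≤ 1 := by
    nlinarith [Complex.sq_norm w, Complex.normSq_apply w, norm_nonneg w]
  refine Set.disjoint_left.mpr fun z hp hq => ?_
  have hp' : (2 * z.re - p) ^ 2 + (2 * z.im) ^ 2 ≤ 1 := by simpa using hsq hp
  have hq' : (2 * z.re - q) ^ 2 + (2 * z.im) ^ 2 ≤ 1 := by simpa using hsq hq
  nlinarith [z.im_pos, sq_abs (p - q), sq_nonneg (2 * z.re - p + (2 * z.re - q))]

end UpperHalfPlane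

open UpperHalfPlane

/-- The matrices `A = [[5,2],[2,1]]` and `B = [[1,2],[2,5]]` generate a free subgroup of
rank 2 of `SL₂(ℤ)`: the canonical homomorphism from the free group on two generators
sending the generators to `A` and `B` is injective. -/
theorem matA_matB_free :
    Function.Injective ⇑(FreeGroup.lift ![matA, matB] :
      FreeGroup (Fin 2) →* Matrix.SpecialLinearGroup (Fin 2) ℤ) := by
  let p : Fin 2 ⊕ Fin 2 → ℤ := Sum.elim ![5, 1] ![-1, -5]
  have hdisk : Sum.elim (fun i => isometricDisk (![matA, matB] i : GL (Fin 2) ℝ)⁻¹)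
      (fun i => isometricDisk (![matA, matB] i : GL (Fin 2) ℝ)) =
      fun k => {z : ℍ | ‖2 * (z : ℂ) - (p k : ℝ)‖ ≤ 1} := by
    ext (i | i) z <;> fin_cases i <;>
      simp [p, isometricDisk, denom, matA, matB, Matrix.SpecialLinearGroup.toGL,
        Matrix.adjugate_fin_two, neg_add_eq_sub, norm_sub_rev]
  have hp : Pairwise fun k l => 2 ≤ |p k - p l| := by
    unfold Pairwise
    decide
  have hfree := FreeGroup.injective_lift_of_pairwise_disjoint_isometricDisk
    (fun i => (![matA, matB] i : GL (Fin 2) ℝ)) fun k l hkl => by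
      rw [hdisk]
      exact disjoint_setOf_norm_two_mul_sub_le_one (mod_cast hp hkl)
  have hcomp : (Matrix.SpecialLinearGroup.mapGL ℝ).comp (FreeGroup.lift ![matA, matB]) =
      FreeGroup.lift fun i => (![matA, matB] i : GL (Fin 2) ℝ) := by
    ext i
    simp
  rw [← hcomp, MonoidHom.coe_comp] at hfree
  exact hfree.of_comp
end

section
/- Let K be an algebraically closed field and let Φ : Kⁿ → Kⁿ be a polynomial map (each coordinate of Φ is a polynomial in n variables over K). Let V be the Zariski closure of Φⁿ(Kⁿ), the image of the n-th iterate of Φ. Then V is an irreducible closed subvariety of Kⁿ, Φ(V) ⊆ V, and Φ(V) is Zariski dense in V (i.e. the restriction Φ|_V : V → V is dominant). -/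
/-!
Over the infinite field `K`, the vanishing ideal of `Φᵏ(Kⁿ)` is the preimage of `(0)` under the
`k`-th iterate of the substitution endomorphism `f ↦ f(P)` of `K[x₁,…,xₙ]`, so these ideals form
an increasing chain of primes, which is constant as soon as two consecutive terms agree. Since
`K[x₁,…,xₙ]` has Krull dimension `n`, the chain cannot increase strictly `n + 1` times, so the
ideal of `V` is fixed by the pullback along `Φ`: this is the density of `Φ(V)` in `V`.
-/

open MvPolynomial

namespace Order

theorem iterate_succ_eq_iterate_of_krullDim_le {α : Type*} [PartialOrder α] {d : ℕ}
    (hα : krullDim α ≤ d) {f : α → α} (hf : Monotone f) {x : α} (hx : x ≤ f x) :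
    f^[d + 1] x = f^[d] x := by
  by_contra hne
  have hlt : ∀ k ≤ d, f^[k] x < f^[k + 1] x := by
    intro k hk
    refine (hf.monotone_iterate_of_le_map hx k.le_succ).lt_of_ne fun heq => hne ?_
    have hstay : ∀ m, f^[k + m] x = f^[k] x := fun m => by
      rw [add_comm, Function.iterate_add_apply]
      exact Function.IsFixedPt.iterate
        ((Function.iterate_succ_apply' f k x).symm.trans heq.symm) m
    obtain ⟨m, rfl⟩ := Nat.exists_eq_add_of_le hk
    rw [add_assoc, hstay, hstay]
  let chain : LTSeries α := ⟨d + 1, fun i => f^[i] x, fun i => hlt i (by omega)⟩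
  have hlen : ((d + 1 : ℕ) : WithBot ℕ∞) ≤ d :=
    (LTSeries.length_le_krullDim chain).trans hα
  norm_cast at hlen
  omega

end Order

theorem PrimeSpectrum.asIdeal_comap_iterate {R F : Type*} [CommRing R] [FunLike F R R]
    [RingHomClass F R R] (φ : F) (k : ℕ) (p : PrimeSpectrum R) :
    ((PrimeSpectrum.comap (φ : R →+* R))^[k] p).asIdeal = (Ideal.comap φ)^[k] p.asIdeal :=
  (show Function.Semiconj PrimeSpectrum.asIdeal (PrimeSpectrum.comap (φ : R →+* R))
    (Ideal.comap φ) from fun _ => rfl).iterate_right k p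

theorem Ideal.comap_iterate_succ_bot {R F : Type*} [CommRing R] [IsDomain R] [FunLike F R R]
    [RingHomClass F R R] {d : ℕ} (hR : ringKrullDim R ≤ d) (φ : F) :
    (Ideal.comap φ)^[d + 1] ⊥ = (Ideal.comap φ)^[d] ⊥ := by
  rw [← PrimeSpectrum.asIdeal_bot, ← PrimeSpectrum.asIdeal_comap_iterate,
    ← PrimeSpectrum.asIdeal_comap_iterate,
    Order.iterate_succ_eq_iterate_of_krullDim_le hR (fun _ _ => Ideal.comap_mono) bot_le]

theorem Ideal.isPrime_comap_iterate_bot {R F : Type*} [CommRing R] [IsDomain R] [FunLike F R R]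
    [RingHomClass F R R] (φ : F) (k : ℕ) : ((Ideal.comap φ)^[k] ⊥).IsPrime := by
  rw [← PrimeSpectrum.asIdeal_bot, ← PrimeSpectrum.asIdeal_comap_iterate]
  exact PrimeSpectrum.isPrime _

namespace MvPolynomial

variable {σ τ K : Type*} [Field K]

theorem eval_aeval (P : τ → MvPolynomial σ K) (v : σ → K) (f : MvPolynomial τ K) :
    eval v (aeval P f) = eval (fun i => eval v (P i)) f := by
  rw [aeval_eq_bind₁]
  exact aeval_bind₁ v P f

theorem vanishingIdeal_image (P : τ → MvPolynomial σ K) {Φ : (σ → K) → τ → K}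
    (hΦ : ∀ v i, Φ v i = eval v (P i)) (S : Set (σ → K)) :
    vanishingIdeal K (Φ '' S) = (vanishingIdeal K S).comap (aeval P) := by
  have hΦ' : ∀ v f, eval (Φ v) f = eval v (aeval P f) := fun v f => by
    rw [eval_aeval, show Φ v = _ from _root_.funext (hΦ v)]
  ext f
  simp [mem_vanishingIdeal_iff, hΦ']

theorem vanishingIdeal_univ [Infinite K] : vanishingIdeal K (Set.univ : Set (σ → K)) = ⊥ := by
  ext f
  simp only [mem_vanishingIdeal_iff, Set.mem_univ, forall_const, Ideal.mem_bot]
  exact ⟨fun h => MvPolynomial.funext fun v => by simpa using h v, fun h v => by simp [h]⟩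

theorem vanishingIdeal_range_iterate [Infinite K] (P : σ → MvPolynomial σ K)
    {Φ : (σ → K) → σ → K} (hΦ : ∀ v i, Φ v i = eval v (P i)) (k : ℕ) :
    vanishingIdeal K (Set.range Φ^[k]) = (Ideal.comap (aeval P))^[k] ⊥ := by
  induction k with
  | zero => simp [vanishingIdeal_univ]
  | succ k ih =>
    rw [Function.iterate_succ', Set.range_comp, vanishingIdeal_image P hΦ, ih,
      Function.iterate_succ_apply']

end MvPolynomial

/-- Let `K` be an algebraically closed field and `Φ : Kⁿ → Kⁿ` a polynomial map, with
coordinates given by the polynomials `P i`. Let `V` be the Zariski closure of the image of the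
`n`-th iterate `Φⁿ`. Then `V` is irreducible (its vanishing ideal is prime), `Φ(V) ⊆ V`,
and `Φ(V)` is Zariski dense in `V` (`Φ|_V` is dominant). -/
theorem closure_image_iterate_irreducible_and_dominant
    {K : Type*} [Field K] [IsAlgClosed K] (n : ℕ)
    (P : Fin n → MvPolynomial (Fin n) K) (Φ : (Fin n → K) → (Fin n → K))
    (hΦ : ∀ v i, Φ v i = MvPolynomial.eval v (P i)) :
    (vanishingIdeal K (zeroLocus K (vanishingIdeal K (Set.range (Φ^[n]))))).IsPrime ∧
    Φ '' zeroLocus K (vanishingIdeal K (Set.range (Φ^[n]))) ⊆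
      zeroLocus K (vanishingIdeal K (Set.range (Φ^[n]))) ∧
    zeroLocus K (vanishingIdeal K (Φ '' zeroLocus K (vanishingIdeal K (Set.range (Φ^[n]))))) =
      zeroLocus K (vanishingIdeal K (Set.range (Φ^[n]))) := by
  set I := vanishingIdeal K (Set.range (Φ^[n]))
  have hI : I = (Ideal.comap (aeval P))^[n] ⊥ := vanishingIdeal_range_iterate P hΦ n
  have hdim : ringKrullDim (MvPolynomial (Fin n) K) ≤ n := by
    simp [ringKrullDim_eq_zero_of_field]
  have hclosed : vanishingIdeal K (zeroLocus K I) = I :=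
    zeroLocus_vanishingIdeal_galoisConnection.u_l_u_eq_u _
  have hstable : vanishingIdeal K (Φ '' zeroLocus K I) = I := by
    rw [vanishingIdeal_image P hΦ, hclosed, hI,
      ← Function.iterate_succ_apply' (Ideal.comap (aeval P)), Ideal.comap_iterate_succ_bot hdim]
  refine ⟨?_, ?_, by rw [hstable]⟩
  · rw [hclosed, hI]
    exact Ideal.isPrime_comap_iterate_bot _ n
  · calc Φ '' zeroLocus K I ⊆ zeroLocus K (vanishingIdeal K (Φ '' zeroLocus K I)) :=
          zeroLocus_vanishingIdeal_le _
      _ = zeroLocus K I := by rw [hstable]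
end

section
/- Let Φ = (Φ₁,…,Φₙ) be an n-tuple of polynomials in ℤ[x₁,…,xₙ], let I(V(ℤ)) ⊆ ℤ[x₁,…,xₙ] be the kernel of (Φ*)ⁿ, and for a prime p let I(V(𝔽_p)) ⊆ 𝔽_p[x₁,…,xₙ] be the kernel of ((Φ_p)*)ⁿ, where Φ_p is the reduction of Φ modulo p. Then there exists a natural number B such that for all primes p > B, the ideal of 𝔽_p[x₁,…,xₙ] generated by the reductions modulo p of the generators of I(V(ℤ)) equals I(V(𝔽_p)). -/
open MvPolynomial

/-- The substitution endomorphism `Φ* : f ↦ f ∘ Φ` of the polynomial ring `R[x₁,…,xₙ]`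
induced by an `n`-tuple `Φ` of polynomials. -/
noncomputable def substEnd (R : Type*) [CommRing R] {n : ℕ}
    (Φ : Fin n → MvPolynomial (Fin n) R) :
    MvPolynomial (Fin n) R →ₐ[R] MvPolynomial (Fin n) R :=
  MvPolynomial.aeval Φ

/-- The ideal `I(V(R))`: the kernel of the `n`-th power `(Φ*)ⁿ` of the substitution
endomorphism, i.e. the set of `f` with `f(Φⁿ) = 0`. -/
noncomputable def iterKer (R : Type*) [CommRing R] {n : ℕ}
    (Φ : Fin n → MvPolynomial (Fin n) R) : Ideal (MvPolynomial (Fin n) R) :=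
  RingHom.ker (substEnd R Φ ^ n)

/-!
Let `φ = (Φ*)ⁿ` and `S = φ(ℤ[x])`. If the reduction of `f` lies in `I(V(𝔽_p))`, then
`φ f = p • g`; as soon as `g = φ h` lies in `S`, the polynomial `f - p • h` lies in
`I(V(ℤ))` and has the same reduction as `f`. So it suffices that the `ℤ`-torsion of
`ℤ[x]/S` is killed by powers of one nonzero integer `a`; then any `B ≥ |a|` works.

This holds for any Noetherian ring `A` and finite type `A`-algebra `T` in place of
`S ⊆ ℤ[x]`. Adjoining the generators one at a time reduces it to `T = A[θ]`, filtered by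
`Mₜ = A + Aθ + ⋯ + Aθᵗ`. The layer `Mₜ₊₁/Mₜ` is `A/Jₜ` for the colon ideal
`Jₜ = (Mₜ : θᵗ⁺¹)`; the `Jₜ` increase, hence are eventually constant, so a single integer
controls the torsion of all layers beyond some `t₀` as well as that of the finitely
generated `A`-module `Mₜ₀/A`.
-/

/-- The `ℤ`-torsion of `M` modulo `N` is `a`-power torsion. -/
def TorsionKilledByPowers {V : Type*} [AddCommGroup V] (a : ℤ) (N M : Set V) : Prop :=
  ∀ x ∈ M, ∀ k : ℤ, k ≠ 0 → k • x ∈ N → ∃ s : ℕ, a ^ s • x ∈ N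

namespace TorsionKilledByPowers

variable {V σ : Type*} [AddCommGroup V] [SetLike σ V] [AddSubgroupClass σ V]
  {a : ℤ} {P : σ} {M L : Set V}

lemma mono_right {N : Set V} (h : TorsionKilledByPowers a N M) (hLM : L ⊆ M) :
    TorsionKilledByPowers a N L :=
  fun x hx => h x (hLM hx)

lemma mul_right (h : TorsionKilledByPowers a P M) (b : ℤ) :
    TorsionKilledByPowers (a * b) P M := by
  intro x hx k hk hkx
  obtain ⟨s, hs⟩ := h x hx k hk hkx
  exact ⟨s, by rw [mul_pow, mul_comm, mul_smul]; exact zsmul_mem hs _⟩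

lemma mul_left (b : ℤ) (h : TorsionKilledByPowers a P M) :
    TorsionKilledByPowers (b * a) P M :=
  mul_comm a b ▸ h.mul_right b

lemma trans (hPM : (P : Set V) ⊆ M) (hM : TorsionKilledByPowers a P M)
    (hL : TorsionKilledByPowers a M L) : TorsionKilledByPowers a P L := by
  intro x hx k hk hkx
  obtain ⟨s, hs⟩ := hL x hx k hk (hPM hkx)
  obtain ⟨t, ht⟩ := hM _ hs k hk (by rw [smul_comm]; exact zsmul_mem hkx _)
  exact ⟨t + s, by rwa [pow_add, mul_smul]⟩

lemma iUnion {M : ℕ → σ} (hM : Monotone fun t => (M t : Set V)) {t₀ : ℕ}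
    (h₀ : TorsionKilledByPowers a (M 0) (M t₀ : Set V))
    (hstep : ∀ t, t₀ ≤ t → TorsionKilledByPowers a (M t) (M (t + 1) : Set V)) :
    TorsionKilledByPowers a (M 0) (⋃ t, (M t : Set V)) := by
  have h : ∀ d, TorsionKilledByPowers a (M 0) (M (t₀ + d) : Set V) := by
    intro d
    induction d with
    | zero => exact h₀
    | succ d ih => exact ih.trans (hM (Nat.zero_le _)) (hstep _ (Nat.le_add_right _ _))
  intro x hx
  obtain ⟨t, ht⟩ := Set.mem_iUnion.1 hx
  exact h t x (hM (Nat.le_add_left t t₀) ht)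

lemma mem_of_isCoprime (h : TorsionKilledByPowers a P M) {x : V} (hx : x ∈ M) {p : ℤ}
    (hp : p ≠ 0) (hpa : IsCoprime p a) (hpx : p • x ∈ P) : x ∈ P := by
  obtain ⟨s, hs⟩ := h x hx p hp hpx
  obtain ⟨u, v, huv⟩ := hpa.pow_right (n := s)
  have hdecomp : x = u • p • x + v • a ^ s • x := by
    rw [smul_smul, smul_smul, ← add_smul, huv, one_smul]
  rw [hdecomp]
  exact add_mem (zsmul_mem hpx u) (zsmul_mem hs v)

theorem exists_of_fg {R : Type*} [CommRing R] [IsNoetherianRing R] [Module R V]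
    (N M : Submodule R V) (hM : M.FG) :
    ∃ a : ℤ, a ≠ 0 ∧ TorsionKilledByPowers a N (M : Set V) := by
  have := isNoetherian_of_fg_of_noetherian M hM
  let c : ℤ → Submodule R M := fun k => (N.comap (k • LinearMap.id)).comap M.subtype
  have hc_mem : ∀ k (x : M), x ∈ c k ↔ k • (x : V) ∈ N := fun _ _ => Iff.rfl
  have hc : ∀ k l, c k ≤ c (l * k) := fun k l x hx => by
    rw [hc_mem, mul_smul]
    exact zsmul_mem ((hc_mem k x).1 hx) l
  -- A maximal `c a` absorbs every `c k`, as both lie below `c (k * a)`.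
  obtain ⟨_, ⟨a, ha, rfl⟩, hmax⟩ :=
    set_has_maximal_iff_noetherian.2 ‹_› (c '' {k | k ≠ 0}) ⟨c 1, 1, one_ne_zero, rfl⟩
  refine ⟨a, ha, fun x hx k hk hkx => ⟨1, ?_⟩⟩
  have hca : c (k * a) = c a :=
    ((hc a k).eq_of_not_lt (hmax _ ⟨k * a, mul_ne_zero hk ha, rfl⟩)).symm
  rw [pow_one]
  refine (hc_mem a ⟨x, hx⟩).1 ?_
  rw [← hca, mul_comm]
  exact hc k a ((hc_mem k ⟨x, hx⟩).2 hkx)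

end TorsionKilledByPowers

section PowersSpan

variable (A : Type*) {T : Type*} [CommRing A] [CommRing T] [Algebra A T]

def powersSpan (θ : T) (t : ℕ) : Submodule A T :=
  Submodule.span A ((θ ^ ·) '' Set.Iic t)

variable {A} (θ : T)

lemma pow_mem_powersSpan {i t : ℕ} (h : i ≤ t) : θ ^ i ∈ powersSpan A θ t :=
  Submodule.subset_span ⟨i, h, rfl⟩

lemma powersSpan_mono : Monotone (powersSpan A θ) := fun _ _ hst =>
  Submodule.span_mono (Set.image_mono (Set.Iic_subset_Iic.2 hst))

lemma fg_powersSpan (t : ℕ) : (powersSpan A θ t).FG :=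
  Submodule.fg_def.2 ⟨_, (Set.finite_Iic t).image _, rfl⟩

lemma coe_powersSpan_zero : (powersSpan A θ 0 : Set T) = Set.range (algebraMap A T) := by
  ext x
  rw [powersSpan, show Set.Iic (0 : ℕ) = {0} from Set.Iic_bot]
  simp [Submodule.mem_span_singleton, Algebra.algebraMap_eq_smul_one]

lemma powersSpan_succ (t : ℕ) :
    powersSpan A θ (t + 1) = powersSpan A θ t ⊔ A ∙ θ ^ (t + 1) := by
  rw [powersSpan, ← Order.succ_eq_add_one, Order.Iic_succ, Set.image_insert_eq,
    Submodule.span_insert, sup_comm, powersSpan]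

lemma mul_mem_powersSpan_succ {t : ℕ} {x : T} (hx : x ∈ powersSpan A θ t) :
    θ * x ∈ powersSpan A θ (t + 1) := by
  induction hx using Submodule.span_induction with
  | mem _ hy =>
    obtain ⟨i, hi, rfl⟩ := hy
    exact pow_succ' θ i ▸ pow_mem_powersSpan θ (Nat.succ_le_succ hi)
  | zero => simp
  | add _ _ _ _ hx hy => exact mul_add θ _ _ ▸ add_mem hx hy
  | smul r _ _ hx => exact (mul_smul_comm r θ _).symm ▸ Submodule.smul_mem _ r hx

lemma adjoin_singleton_subset_iUnion_powersSpan :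
    (Algebra.adjoin A {θ} : Set T) ⊆ ⋃ t, (powersSpan A θ t : Set T) := by
  intro x hx
  rw [SetLike.mem_coe, Algebra.adjoin_singleton_eq_range_aeval] at hx
  obtain ⟨p, rfl⟩ := hx
  refine Set.mem_iUnion.2 ⟨p.natDegree, ?_⟩
  rw [AlgHom.toRingHom_eq_coe, RingHom.coe_coe, Polynomial.aeval_eq_sum_range]
  exact Submodule.sum_mem _ fun i hi =>
    Submodule.smul_mem _ _ (pow_mem_powersSpan θ (Nat.lt_succ_iff.1 (Finset.mem_range.1 hi)))

lemma colon_powersSpan_mono :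
    Monotone fun t => (powersSpan A θ t).colon {θ ^ (t + 1)} := by
  refine monotone_nat_of_le_succ fun t r hr => ?_
  rw [Submodule.mem_colon_singleton] at hr ⊢
  rw [pow_succ', ← mul_smul_comm]
  exact mul_mem_powersSpan_succ θ hr

lemma torsionKilledByPowers_powersSpan_succ {b : ℤ} {t : ℕ}
    (hJ : TorsionKilledByPowers b ((powersSpan A θ t).colon {θ ^ (t + 1)} : Set A) Set.univ) :
    TorsionKilledByPowers b (powersSpan A θ t) (powersSpan A θ (t + 1) : Set T) := by
  intro x hx k hk hkx
  rw [SetLike.mem_coe, powersSpan_succ, Submodule.mem_sup] at hx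
  obtain ⟨m, hm, _, hy, rfl⟩ := hx
  obtain ⟨r, rfl⟩ := Submodule.mem_span_singleton.1 hy
  have hkr : k • r ∈ (powersSpan A θ t).colon {θ ^ (t + 1)} := by
    rw [Submodule.mem_colon_singleton, smul_assoc]
    simpa [smul_add] using sub_mem hkx (zsmul_mem hm k)
  obtain ⟨s, hs⟩ := hJ r trivial k hk hkr
  rw [SetLike.mem_coe, Submodule.mem_colon_singleton, smul_assoc] at hs
  exact ⟨s, by rw [smul_add]; exact add_mem (zsmul_mem hm _) hs⟩

theorem exists_torsionKilledByPowers_adjoin_singleton [IsNoetherianRing A] :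
    ∃ a : ℤ, a ≠ 0 ∧
      TorsionKilledByPowers a (⊥ : Subalgebra A T) (Algebra.adjoin A {θ} : Set T) := by
  obtain ⟨t₀, ht₀⟩ := (monotone_stabilizes_iff_noetherian (R := A) (M := A)).2 inferInstance
    ⟨_, colon_powersSpan_mono θ⟩
  obtain ⟨b, hb, hJ⟩ := TorsionKilledByPowers.exists_of_fg
    ((powersSpan A θ t₀).colon {θ ^ (t₀ + 1)}) ⊤ (IsNoetherian.noetherian (⊤ : Ideal A))
  obtain ⟨c, hc, hM⟩ := TorsionKilledByPowers.exists_of_fg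
    (powersSpan A θ 0) (powersSpan A θ t₀) (fg_powersSpan θ t₀)
  refine ⟨c * b, mul_ne_zero hc hb, ?_⟩
  rw [Algebra.coe_bot, ← coe_powersSpan_zero θ]
  refine (TorsionKilledByPowers.iUnion (SetLike.coe_mono.comp (powersSpan_mono θ))
    (hM.mul_right b) fun t ht => ?_).mono_right (adjoin_singleton_subset_iUnion_powersSpan θ)
  refine (torsionKilledByPowers_powersSpan_succ θ ?_).mul_left c
  have hJt : (powersSpan A θ t₀).colon {θ ^ (t₀ + 1)} =
      (powersSpan A θ t).colon {θ ^ (t + 1)} := ht₀ t ht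
  rwa [hJt, Submodule.top_coe] at hJ

end PowersSpan

theorem exists_torsionKilledByPowers_adjoin {A T : Type*} [CommRing A] [IsNoetherianRing A]
    [CommRing T] [Algebra A T] {s : Set T} (hs : s.Finite) :
    ∃ a : ℤ, a ≠ 0 ∧
      TorsionKilledByPowers a (⊥ : Subalgebra A T) (Algebra.adjoin A s : Set T) := by
  induction s, hs using Set.Finite.induction_on with
  | empty => exact ⟨1, one_ne_zero, fun x hx _ _ _ => ⟨0, by simpa using hx⟩⟩
  | @insert θ s _ hs ih =>
    obtain ⟨a, ha, hA⟩ := ih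
    have := Algebra.FiniteType.adjoin_of_finite (R := A) hs
    have := Algebra.FiniteType.isNoetherianRing A (Algebra.adjoin A s)
    obtain ⟨b, hb, hB⟩ :=
      exists_torsionKilledByPowers_adjoin_singleton (A := Algebra.adjoin A s) θ
    rw [Algebra.coe_bot, Subalgebra.setRange_algebraMap] at hB
    refine ⟨a * b, mul_ne_zero ha hb, ?_⟩
    rw [Set.insert_eq, Set.union_comm, Algebra.adjoin_union_eq_adjoin_adjoin,
      Subalgebra.coe_restrictScalars]
    exact (hA.mul_right b).trans (SetLike.coe_subset_coe.2 bot_le) (hB.mul_left a)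

theorem Subalgebra.exists_torsionKilledByPowers {R T : Type*} [CommRing R] [CommRing T]
    [Algebra R T] [Algebra.FiniteType R T] (S : Subalgebra R T) [IsNoetherianRing S] :
    ∃ a : ℤ, a ≠ 0 ∧ TorsionKilledByPowers a (S : Set T) Set.univ := by
  have := Algebra.FiniteType.of_restrictScalars_finiteType R S T
  obtain ⟨s, hs⟩ := Algebra.FiniteType.out (R := S) (A := T)
  obtain ⟨a, ha, h⟩ := exists_torsionKilledByPowers_adjoin (A := S) s.finite_toSet
  rw [hs, Algebra.coe_bot, Subalgebra.setRange_algebraMap, Algebra.coe_top] at h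
  exact ⟨a, ha, h⟩

lemma isCoprime_natCast_of_natAbs_lt {p : ℕ} (hp : p.Prime) {a : ℤ} (ha : a ≠ 0)
    (hpa : a.natAbs < p) : IsCoprime (p : ℤ) a :=
  Int.isCoprime_iff_gcd_eq_one.2 <|
    hp.coprime_iff_not_dvd.2 fun h => (Nat.le_of_dvd (Int.natAbs_pos.2 ha) h).not_gt hpa

lemma MvPolynomial.exists_eq_zsmul_of_map_eq_zero {σ : Type*} {p : ℕ} {F : MvPolynomial σ ℤ}
    (hF : map (Int.castRingHom (ZMod p)) F = 0) : ∃ g, F = (p : ℤ) • g := by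
  rw [← RingHom.mem_ker, ker_map, ZMod.ker_intCastRingHom, Ideal.map_span, Set.image_singleton,
    Ideal.mem_span_singleton] at hF
  obtain ⟨g, hg⟩ := hF
  exact ⟨g, by rw [hg, C_mul']⟩

section Reduction

variable {R R' : Type*} [CommRing R] [CommRing R'] (σ : R →+* R') {n : ℕ}
  (Φ : Fin n → MvPolynomial (Fin n) R)

lemma map_substEnd (f : MvPolynomial (Fin n) R) :
    map σ (substEnd R Φ f) = substEnd R' (fun i => map σ (Φ i)) (map σ f) :=
  map_bind₁ σ Φ f

lemma map_substEnd_pow (m : ℕ) (f : MvPolynomial (Fin n) R) :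
    map σ ((substEnd R Φ ^ m) f) = (substEnd R' (fun i => map σ (Φ i)) ^ m) (map σ f) := by
  induction m generalizing f with
  | zero => rfl
  | succ m ih => rw [pow_succ, AlgHom.mul_apply, ih, map_substEnd, pow_succ, AlgHom.mul_apply]

lemma map_iterKer_le :
    Ideal.map (map σ) (iterKer R Φ) ≤ iterKer R' (fun i => map σ (Φ i)) :=
  Ideal.map_le_iff_le_comap.2 fun f hf => by
    rw [iterKer, RingHom.mem_ker] at hf
    rw [Ideal.mem_comap, iterKer, RingHom.mem_ker, ← map_substEnd_pow, hf, map_zero]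

end Reduction

/-- There is a bound `B` such that for every prime `p > B`, the ideal of `𝔽_p[x₁,…,xₙ]`
generated by the reductions mod `p` of (the generators of) `I(V(ℤ))` equals `I(V(𝔽_p))`,
the kernel of `((Φ_p)*)ⁿ` for the reduction `Φ_p` of `Φ` mod `p`. -/
theorem iterKer_reduction_eq_for_large_primes (n : ℕ)
    (Φ : Fin n → MvPolynomial (Fin n) ℤ) :
    ∃ B : ℕ, ∀ p : ℕ, p.Prime → p > B →
      Ideal.map (MvPolynomial.map (Int.castRingHom (ZMod p))) (iterKer ℤ Φ) =
        iterKer (ZMod p) (fun i => MvPolynomial.map (Int.castRingHom (ZMod p)) (Φ i)) := by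
  set φ := substEnd ℤ Φ ^ n
  have : IsNoetherianRing φ.range :=
    isNoetherianRing_of_surjective _ _ φ.rangeRestrict.toRingHom φ.rangeRestrict_surjective
  obtain ⟨a, ha, hsat⟩ := φ.range.exists_torsionKilledByPowers
  refine ⟨a.natAbs, fun p hp hpa => le_antisymm (map_iterKer_le _ Φ) fun q hq => ?_⟩
  obtain ⟨f, rfl⟩ := map_surjective (Int.castRingHom (ZMod p)) ZMod.intCast_surjective q
  obtain ⟨g, hg⟩ : ∃ g, φ f = (p : ℤ) • g := by
    rw [iterKer, RingHom.mem_ker, ← map_substEnd_pow] at hq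
    exact exists_eq_zsmul_of_map_eq_zero hq
  obtain ⟨h, hh⟩ := φ.mem_range.1 <|
    hsat.mem_of_isCoprime trivial (by exact_mod_cast hp.ne_zero)
      (isCoprime_natCast_of_natAbs_lt hp ha hpa) (hg ▸ φ.mem_range_self f)
  have hker : f - (p : ℤ) • h ∈ iterKer ℤ Φ := by
    rw [iterKer, RingHom.mem_ker, map_sub, map_zsmul, hh, ← hg, sub_self]
  simpa using Ideal.mem_map_of_mem (map (Int.castRingHom (ZMod p))) hker
end

section
/- Let F_k = ⟨x₁,…,x_k⟩ be a free group, φ an endomorphism of F_k given by φ(x_i) = w_i(x₁,…,x_k), and G a group. Define φ_G : G^k → G^k by φ_G(g₁,…,g_k) = (w₁(g₁,…,g_k),…,w_k(g₁,…,g_k)). Suppose the point g = (g₁,…,g_k) ∈ G^k is periodic under φ_G with period l, i.e. φ_G^l(g) = g. Let P = G ≀ C_l be the wreath product, the semidirect product of G^l with the cyclic group C_l = ⟨c⟩ of order l acting by cyclic shift of the coordinates. Then the assignment t ↦ c, x_i ↦ (the element of G^l whose j-th coordinate, 0 ≤ j ≤ l−1, is the i-th coordinate of φ_G^j(g)) extends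 to a group homomorphism from HNN_φ(F_k) to P. -/
/-- The defining relations of the mapping torus (ascending HNN extension)
`HNN_φ(F_k) = ⟨x₁,…,x_k, t ∣ t xᵢ t⁻¹ = φ(xᵢ)⟩`, with generators `Option (Fin k)`
where `none` is the stable letter `t` and `some i` is `xᵢ`. -/
def mappingTorusRels (k : ℕ) (φ : FreeGroup (Fin k) →* FreeGroup (Fin k)) :
    Set (FreeGroup (Option (Fin k))) :=
  { r | ∃ i : Fin k,
      r = FreeGroup.of none * FreeGroup.map Option.some (FreeGroup.of i) *
          (FreeGroup.of none)⁻¹ * (FreeGroup.map Option.some (φ (FreeGroup.of i)))⁻¹ }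

/-- The mapping torus `HNN_φ(F_k)` of an endomorphism `φ` of the free group `F_k`. -/
abbrev MappingTorus (k : ℕ) (φ : FreeGroup (Fin k) →* FreeGroup (Fin k)) : Type :=
  PresentedGroup (mappingTorusRels k φ)

/-- The self-map `φ_G` of `G^k` induced by an endomorphism `φ` of `F_k`: it sends
`(g₁,…,g_k)` to `(w₁(g₁,…,g_k),…,w_k(g₁,…,g_k))` where `wᵢ = φ(xᵢ)`. -/
def wordMap {k : ℕ} (φ : FreeGroup (Fin k) →* FreeGroup (Fin k))
    {G : Type*} [Group G] : (Fin k → G) → (Fin k → G) :=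
  fun v i => FreeGroup.lift v (φ (FreeGroup.of i))

/-- The cyclic shift of `G^l` (indexed by `ZMod l`) by `a`. -/
def cycShift {G : Type*} [Group G] {l : ℕ} (a : ZMod l) :
    (ZMod l → G) ≃* (ZMod l → G) where
  toFun v := fun j => v (j + a)
  invFun v := fun j => v (j - a)
  left_inv v := funext fun j => by simp
  right_inv v := funext fun j => by simp
  map_mul' v w := rfl

/-- The action of the cyclic group `C_l = Multiplicative (ZMod l)` on `G^l` by cyclic
shifts of the coordinates. -/
def cycShiftHom (G : Type*) [Group G] (l : ℕ) :
    Multiplicative (ZMod l) →* MulAut (ZMod l → G) where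
  toFun a := cycShift (Multiplicative.toAdd a)
  map_one' := MulEquiv.ext fun v => funext fun j => by
    simp [cycShift]
  map_mul' a b := MulEquiv.ext fun v => funext fun j => by
    simp [cycShift, MulAut.mul_def, add_assoc]

/-- The wreath product `G ≀ C_l`: the semidirect product of `G^l` with the cyclic group
`C_l` of order `l` acting by cyclic shifts. -/
abbrev WreathCyc (G : Type*) [Group G] (l : ℕ) : Type _ :=
  (ZMod l → G) ⋊[cycShiftHom G l] Multiplicative (ZMod l)

lemma iter_mod {α : Type*} (f : α → α) (g : α) (l : ℕ) (hper : f^[l] g = g) (n : ℕ) :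
    f^[n % l] g = f^[n] g := by
  conv_rhs => rw [← Nat.div_add_mod n l]
  rw [add_comm, Function.iterate_add_apply, Function.iterate_mul,
    Function.iterate_fixed hper]


/-- Suppose `g ∈ G^k` is periodic of period `l` under the map `φ_G` induced by an
endomorphism `φ` of `F_k`. Then `t ↦ c` (the generator of `C_l`) and
`xᵢ ↦ (gᵢ, φ_G(g)ᵢ, …, φ_G^{l-1}(g)ᵢ) ∈ G^l` extends to a group homomorphism from
`HNN_φ(F_k)` to the wreath product `G ≀ C_l`. -/
theorem mappingTorus_to_wreath (k : ℕ) (φ : FreeGroup (Fin k) →* FreeGroup (Fin k))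
    {G : Type*} [Group G] (g : Fin k → G) (l : ℕ) (hl : 0 < l)
    (hper : (wordMap φ)^[l] g = g) :
    ∃ F : MappingTorus k φ →* WreathCyc G l,
      F (PresentedGroup.of (none : Option (Fin k))) =
        ⟨1, Multiplicative.ofAdd (1 : ZMod l)⟩ ∧
      ∀ i : Fin k, F (PresentedGroup.of (some i)) =
        ⟨fun j : ZMod l => (wordMap φ)^[j.val] g i, 1⟩ := by
  have : NeZero l := ⟨hl.ne'⟩
  set V : Fin k → (ZMod l → G) := fun i j => (wordMap φ)^[j.val] g i with hV
  set f : Option (Fin k) → WreathCyc G l := fun o =>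
    Option.elim o (SemidirectProduct.inr (Multiplicative.ofAdd (1 : ZMod l)))
      (fun i => SemidirectProduct.inl (V i)) with hf
  -- the lift on words in the x's is componentwise lift
  have hcomp : (FreeGroup.lift f).comp (FreeGroup.map Option.some)
      = SemidirectProduct.inl.comp (FreeGroup.lift V) := by
    ext i <;> simp [hf, FreeGroup.map.of]
  have hlifteval : ∀ (w : FreeGroup (Fin k)) (j : ZMod l),
      FreeGroup.lift V w j = FreeGroup.lift (fun i => V i j) w := by
    intro w j
    have : (Pi.evalMonoidHom (fun _ : ZMod l => G) j).comp (FreeGroup.lift V)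
        = FreeGroup.lift (fun i => V i j) := by ext i; rfl
    exact DFunLike.congr_fun this w
  have hrel : ∀ r ∈ mappingTorusRels k φ, FreeGroup.lift f r = 1 := by
    rintro r ⟨i, rfl⟩
    have h1 : FreeGroup.lift f (FreeGroup.map Option.some (FreeGroup.of i))
        = SemidirectProduct.inl (V i) := by
      simpa using DFunLike.congr_fun hcomp (FreeGroup.of i)
    have h2 : FreeGroup.lift f (FreeGroup.map Option.some (φ (FreeGroup.of i)))
        = SemidirectProduct.inl (FreeGroup.lift V (φ (FreeGroup.of i))) :=
      by simpa using DFunLike.congr_fun hcomp (φ (FreeGroup.of i))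
    have h0 : FreeGroup.lift f (FreeGroup.of (none : Option (Fin k)))
        = SemidirectProduct.inr (Multiplicative.ofAdd (1 : ZMod l)) := by simp [hf]
    simp only [map_mul, map_inv]
    rw [h0, h1, h2]
    rw [show (SemidirectProduct.inr (Multiplicative.ofAdd (1 : ZMod l)) :
        WreathCyc G l)⁻¹ = SemidirectProduct.inr (Multiplicative.ofAdd (1 : ZMod l))⁻¹
      from (map_inv _ _).symm,
      ← SemidirectProduct.inl_aut (φ := cycShiftHom G l)]
    rw [← map_inv, ← map_mul]
    convert map_one SemidirectProduct.inl
    rw [mul_inv_eq_one]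
    funext j
    show V i (j + 1) = FreeGroup.lift V (φ (FreeGroup.of i)) j
    rw [hlifteval]
    have : FreeGroup.lift (fun i' => V i' j) (φ (FreeGroup.of i))
        = (wordMap φ)^[j.val + 1] g i := by
      rw [Function.iterate_succ_apply']
      rfl
    rw [this, hV]
    show (wordMap φ)^[(j+1).val] g i = _
    have hj : ((j + 1 : ZMod l)).val = (j.val + 1) % l := by
      conv_lhs => rw [show (j + 1 : ZMod l) = ((j.val + 1 : ℕ) : ZMod l) by
        push_cast [ZMod.natCast_val, ZMod.cast_id]; ring]
      rw [ZMod.val_natCast]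
    rw [hj, iter_mod _ _ _ hper]
  refine ⟨PresentedGroup.toGroup hrel, ?_, fun i => ?_⟩
  · rw [PresentedGroup.toGroup.of]; rfl
  · rw [PresentedGroup.toGroup.of]; rfl
end
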